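/- Let n ≥ 1, let V : ℝⁿ → ℝ be smooth with e^{−V} integrable and with e^{−V} and |∇V| e^{−V} bounded on ℝⁿ, and let φ : ℝ → ℝ be a C² convex function. Let h : [0,∞) × ℝⁿ → ℝ be a smooth solution of ∂h/∂t = Δh − ∇V·∇h such that, on each compact time interval, h(t,·) and its spatial derivatives up to second order decay faster than any power of |x|, uniformly in t. Then for all t > 0, d/dt ∫_{ℝⁿ} φ(h(t,x)) e^{−V(x)} dx = −∫_{ℝⁿ} φ''(h(t,x)) |∇h(t,x)|² e^{−V(x)} dx ≤ 0; in particular t ↦ ∫ φ(h(t,·)) e^{−V} dx is a Lyapunov functional. -/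

import Mathlib

/-!
Differentiating under the integral sign (dominated thanks to the decay of `h` and the bound on
`|∇V| e^{-V}`) and using the equation gives `d/dt ∫ φ(h) e^{-V} = ∫ φ'(h) L h e^{-V}` with
`L = Δ - ∇V·∇`. Since `∂ᵢ(φ'(h) e^{-V}) = φ''(h) ∂ᵢh e^{-V} - φ'(h) ∂ᵢV e^{-V}`, an integration
by parts in each coordinate direction cancels the drift term and leaves
`-∫ φ''(h) |∇h|² e^{-V}`, which is nonpositive because `φ'' ≥ 0` for convex `φ`. Monotonicity
on `[0, ∞)` follows by the mean value theorem, continuity at `t = 0` coming from dominated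
convergence.
-/

open MeasureTheory Real

/-- Partial derivative in the `i`-th coordinate direction. -/
noncomputable def pd {n : ℕ} (i : Fin n) (f : EuclideanSpace ℝ (Fin n) → ℝ)
    (x : EuclideanSpace ℝ (Fin n)) : ℝ :=
  fderiv ℝ f x (EuclideanSpace.single i 1)

/-- The Laplacian as the sum of the second partial derivatives. -/
noncomputable def lap {n : ℕ} (f : EuclideanSpace ℝ (Fin n) → ℝ)
    (x : EuclideanSpace ℝ (Fin n)) : ℝ :=
  ∑ i, pd i (pd i f) x

open Set Filter Topology Metric Module

theorem ConvexOn.deriv_deriv_nonneg {φ : ℝ → ℝ} (hconv : ConvexOn ℝ univ φ)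
    (hφ : Differentiable ℝ φ) (y : ℝ) : 0 ≤ deriv (deriv φ) y :=
  (monotoneOn_univ.1 (hconv.monotoneOn_deriv fun x _ => hφ x)).deriv_nonneg

theorem Continuous.exists_abs_comp_le {φ : ℝ → ℝ} (hφ : Continuous φ) (C : ℝ) :
    ∃ M, ∀ y, |y| ≤ C → |φ y| ≤ M := by
  obtain ⟨M, hM⟩ :=
    (isCompact_closedBall (0 : ℝ) C).exists_bound_of_continuousOn hφ.continuousOn
  exact ⟨M, fun y hy => hM y (mem_closedBall_zero_iff.2 hy)⟩

theorem abs_le_of_add_sum_add_sum_le {ι : Type*} [Fintype ι] {a B : ℝ} {b : ι → ℝ}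
    {c : ι → ι → ℝ} (h : |a| + ∑ i, |b i| + ∑ i, ∑ j, |c i j| ≤ B) :
    |a| ≤ B ∧ (∀ i, |b i| ≤ B) ∧ ∀ i j, |c i j| ≤ B := by
  have hb : ∀ i, |b i| ≤ ∑ i, |b i| := fun i =>
    Finset.single_le_sum (f := fun i => |b i|) (fun _ _ => abs_nonneg _) (Finset.mem_univ i)
  have hc : ∀ i j, |c i j| ≤ ∑ i, ∑ j, |c i j| := fun i j =>
    (Finset.single_le_sum (f := fun j => |c i j|) (fun _ _ => abs_nonneg _)
      (Finset.mem_univ j)).trans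
      (Finset.single_le_sum (f := fun i => ∑ j, |c i j|)
        (fun _ _ => Finset.sum_nonneg fun _ _ => abs_nonneg _) (Finset.mem_univ i))
  have hb0 := Finset.sum_nonneg fun i (_ : i ∈ Finset.univ) => abs_nonneg (b i)
  have hc0 := Finset.sum_nonneg fun i (_ : i ∈ Finset.univ) =>
    Finset.sum_nonneg fun j (_ : j ∈ Finset.univ) => abs_nonneg (c i j)
  exact ⟨by linarith, fun i => by linarith [hb i, abs_nonneg a],
    fun i j => by linarith [hc i j, abs_nonneg a]⟩

theorem integrable_div_one_add_norm_pow {E : Type*} [NormedAddCommGroup E] [NormedSpace ℝ E]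
    [FiniteDimensional ℝ E] [MeasurableSpace E] [BorelSpace E] {μ : Measure E}
    [μ.IsAddHaarMeasure] (C : ℝ) {k : ℕ} (hk : finrank ℝ E < k) :
    Integrable (fun x : E => C / (1 + ‖x‖) ^ k) μ := by
  refine ((integrable_one_add_norm (r := k) (by exact_mod_cast hk)).const_mul C).congr
    (ae_of_all _ fun x => ?_)
  simp only [rpow_neg (by positivity : (0 : ℝ) ≤ 1 + ‖x‖), rpow_natCast, div_eq_mul_inv]

section IntegralComp

variable {α : Type*} [MeasurableSpace α] {μ : Measure α} {φ : ℝ → ℝ} {w : α → ℝ}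

theorem continuousWithinAt_integral_comp_mul (hφ : Continuous φ) (hw : Integrable w μ)
    {f : ℝ → α → ℝ} {s : Set ℝ} {t C : ℝ}
    (hf_meas : ∀ᶠ r in 𝓝[s] t, AEStronglyMeasurable (f r) μ)
    (hf_bdd : ∀ᶠ r in 𝓝[s] t, ∀ x, |f r x| ≤ C)
    (hf_cont : ∀ x, ContinuousWithinAt (fun r => f r x) s t) :
    ContinuousWithinAt (fun r => ∫ x, φ (f r x) * w x ∂μ) s t := by
  obtain ⟨M, hM⟩ := hφ.exists_abs_comp_le C
  refine continuousWithinAt_of_dominated (bound := fun x => M * ‖w x‖) ?_ ?_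
    (hw.norm.const_mul M) (ae_of_all _ fun x => ?_)
  · filter_upwards [hf_meas] with r hr
    exact (hφ.comp_aestronglyMeasurable hr).mul hw.1
  · filter_upwards [hf_bdd] with r hr
    refine ae_of_all _ fun x => ?_
    exact norm_mul_le_of_le (hM _ (hr x)) le_rfl
  · exact (hφ.continuousAt.comp_continuousWithinAt (hf_cont x)).mul continuousWithinAt_const

theorem hasDerivAt_integral_comp_mul (hφ : ContDiff ℝ 1 φ) (hw : Integrable w μ)
    {f f' : ℝ → α → ℝ} {bound : α → ℝ} {t ε C : ℝ} (hε : 0 < ε)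
    (hbound : Integrable bound μ)
    (hf_meas : ∀ s ∈ ball t ε, AEStronglyMeasurable (f s) μ)
    (hf'_meas : AEStronglyMeasurable (f' t) μ)
    (hf_bdd : ∀ s ∈ ball t ε, ∀ x, |f s x| ≤ C)
    (hf' : ∀ s ∈ ball t ε, ∀ x, HasDerivAt (fun r => f r x) (f' s x) s)
    (hf'_le : ∀ s ∈ ball t ε, ∀ x, |f' s x * w x| ≤ bound x) :
    HasDerivAt (fun s => ∫ x, φ (f s x) * w x ∂μ)
      (∫ x, deriv φ (f t x) * f' t x * w x ∂μ) t := by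
  obtain ⟨M₀, hM₀⟩ := hφ.continuous.exists_abs_comp_le C
  obtain ⟨M₁, hM₁⟩ := (hφ.continuous_deriv le_rfl).exists_abs_comp_le C
  have ht : t ∈ ball t ε := mem_ball_self hε
  refine (hasDerivAt_integral_of_dominated_loc_of_deriv_le
    (F' := fun s x => deriv φ (f s x) * f' s x * w x) (bound := fun x => M₁ * bound x)
    (ball_mem_nhds t hε) ?_ ?_ ?_ ?_ (hbound.const_mul M₁) ?_).2
  · filter_upwards [ball_mem_nhds t hε] with s hs
    exact (hφ.continuous.comp_aestronglyMeasurable (hf_meas s hs)).mul hw.1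
  · exact hw.bdd_mul (hφ.continuous.comp_aestronglyMeasurable (hf_meas t ht))
      (ae_of_all _ fun x => hM₀ _ (hf_bdd t ht x))
  · exact (((hφ.continuous_deriv le_rfl).comp_aestronglyMeasurable (hf_meas t ht)).mul
      hf'_meas).mul hw.1
  · refine ae_of_all _ fun x s hs => ?_
    rw [mul_assoc]
    exact norm_mul_le_of_le (hM₁ _ (hf_bdd s hs x)) (hf'_le s hs x)
  · exact ae_of_all _ fun x s hs =>
      (((hφ.differentiable one_ne_zero) (f s x)).hasDerivAt.comp s (hf' s hs x)).mul_const (w x)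

end IntegralComp

section WeightedLaplacian

variable {n : ℕ} {V u : EuclideanSpace ℝ (Fin n) → ℝ} {ψ : ℝ → ℝ}

noncomputable def weightedLap (V u : EuclideanSpace ℝ (Fin n) → ℝ)
    (x : EuclideanSpace ℝ (Fin n)) : ℝ :=
  lap u x - ∑ i, pd i V x * pd i u x

theorem contDiff_pd {f : EuclideanSpace ℝ (Fin n) → ℝ} {k m : WithTop ℕ∞}
    (hf : ContDiff ℝ m f) (hkm : k + 1 ≤ m) (i : Fin n) : ContDiff ℝ k (pd i f) :=
  (hf.fderiv_right hkm).clm_apply contDiff_const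

theorem continuous_pd {f : EuclideanSpace ℝ (Fin n) → ℝ} (hf : ContDiff ℝ 1 f) (i : Fin n) :
    Continuous (pd i f) :=
  (contDiff_pd (k := 0) hf le_rfl i).continuous

theorem continuous_pd_pd {f : EuclideanSpace ℝ (Fin n) → ℝ} (hf : ContDiff ℝ 2 f)
    (i j : Fin n) : Continuous (pd i (pd j f)) :=
  continuous_pd (contDiff_pd (k := 1) hf le_rfl j) i

theorem abs_pd_le_norm_fderiv (i : Fin n) (f : EuclideanSpace ℝ (Fin n) → ℝ)
    (x : EuclideanSpace ℝ (Fin n)) : |pd i f x| ≤ ‖fderiv ℝ f x‖ := by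
  simpa [pd, PiLp.norm_single] using (fderiv ℝ f x).le_opNorm (EuclideanSpace.single i 1)

theorem abs_pd_mul_exp_neg_le {Cg : ℝ} {x : EuclideanSpace ℝ (Fin n)}
    (hV : ‖fderiv ℝ V x‖ * exp (-V x) ≤ Cg) (i : Fin n) : |pd i V x * exp (-V x)| ≤ Cg := by
  rw [abs_mul, abs_of_pos (exp_pos _)]
  exact (mul_le_mul_of_nonneg_right (abs_pd_le_norm_fderiv i V x) (exp_pos _).le).trans hV

theorem continuous_weightedLap (hV : ContDiff ℝ 1 V) (hu : ContDiff ℝ 2 u) :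
    Continuous (weightedLap V u) :=
  (continuous_finsetSum _ fun i _ => continuous_pd_pd hu i i).sub
    (continuous_finsetSum _ fun i _ =>
      (continuous_pd hV i).mul (continuous_pd (hu.of_le one_le_two) i))

theorem abs_weightedLap_mul_exp_neg_le {A B Cg : ℝ} {x : EuclideanSpace ℝ (Fin n)}
    (hV : ‖fderiv ℝ V x‖ * exp (-V x) ≤ Cg) (hdd : ∀ i, |pd i (pd i u) x| ≤ A)
    (hd : ∀ i, |pd i u x| ≤ B) :
    |weightedLap V u x * exp (-V x)| ≤ n * (A * exp (-V x) + Cg * B) := by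
  have hsplit : weightedLap V u x * exp (-V x) =
      ∑ i, (pd i (pd i u) x * exp (-V x) - pd i V x * exp (-V x) * pd i u x) := by
    rw [weightedLap, lap, sub_mul, Finset.sum_mul, Finset.sum_mul, ← Finset.sum_sub_distrib]
    exact Finset.sum_congr rfl fun i _ => by ring
  have hterm : ∀ i, |pd i (pd i u) x * exp (-V x) - pd i V x * exp (-V x) * pd i u x| ≤
      A * exp (-V x) + Cg * B := by
    intro i
    have hVi := abs_pd_mul_exp_neg_le hV i
    refine (abs_sub _ _).trans (add_le_add ?_ ?_)
    · rw [abs_mul, abs_of_pos (exp_pos _)]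
      exact mul_le_mul_of_nonneg_right (hdd i) (exp_pos _).le
    · rw [abs_mul]
      exact mul_le_mul hVi (hd i) (abs_nonneg _) ((abs_nonneg _).trans hVi)
  rw [hsplit]
  refine (Finset.abs_sum_le_sum_abs _ _).trans ?_
  refine (Finset.sum_le_sum fun i _ => hterm i).trans_eq ?_
  rw [Finset.sum_const, Finset.card_univ, Fintype.card_fin, nsmul_eq_mul]

theorem pd_comp_mul_exp_neg (i : Fin n) {x : EuclideanSpace ℝ (Fin n)}
    (hψ : DifferentiableAt ℝ ψ (u x)) (hu : DifferentiableAt ℝ u x)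
    (hV : DifferentiableAt ℝ V x) :
    pd i (fun y => ψ (u y) * exp (-V y)) x =
      deriv ψ (u x) * pd i u x * exp (-V x) - ψ (u x) * exp (-V x) * pd i V x := by
  have hG : HasFDerivAt (fun y => ψ (u y) * exp (-V y)) _ x :=
    (hψ.hasDerivAt.comp_hasFDerivAt x hu.hasFDerivAt).mul
      ((hasDerivAt_exp _).comp_hasFDerivAt x hV.hasFDerivAt.neg)
  simp only [pd, hG.fderiv, add_apply, smul_apply, neg_apply, smul_eq_mul, Function.comp_apply]
  ring

theorem integral_mul_pd_eq_neg_integral_pd_mul (i : Fin n) {f g : EuclideanSpace ℝ (Fin n) → ℝ}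
    (hf : Differentiable ℝ f) (hg : Differentiable ℝ g)
    (hf'g : Integrable fun x => pd i f x * g x) (hfg' : Integrable fun x => f x * pd i g x)
    (hfg : Integrable fun x => f x * g x) :
    ∫ x, f x * pd i g x = -∫ x, pd i f x * g x :=
  integral_mul_fderiv_eq_neg_fderiv_mul_of_integrable hf'g hfg' hfg (fun x _ => hf x)
    (fun x _ => hg x)

end WeightedLaplacian

section WeightedIBP

variable {n : ℕ} {V u : EuclideanSpace ℝ (Fin n) → ℝ} {ψ : ℝ → ℝ} {C Cg : ℝ}

theorem integral_comp_mul_exp_neg_mul_pd_pd (i : Fin n) (hV : ContDiff ℝ 1 V)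
    (hψ : ContDiff ℝ 1 ψ) (hu : ContDiff ℝ 2 u)
    (hA : Integrable fun x => ψ (u x) * exp (-V x) * pd i (pd i u) x)
    (hGdu : Integrable fun x => ψ (u x) * exp (-V x) * pd i u x)
    (hD : Integrable fun x => deriv ψ (u x) * pd i u x ^ 2 * exp (-V x) -
      ψ (u x) * exp (-V x) * pd i V x * pd i u x) :
    ∫ x, ψ (u x) * exp (-V x) * pd i (pd i u) x =
      -∫ x, (deriv ψ (u x) * pd i u x ^ 2 * exp (-V x) -
        ψ (u x) * exp (-V x) * pd i V x * pd i u x) := by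
  have hu1 : ContDiff ℝ 1 u := hu.of_le one_le_two
  have hpd : ∀ x, pd i (fun y => ψ (u y) * exp (-V y)) x * pd i u x =
      deriv ψ (u x) * pd i u x ^ 2 * exp (-V x) -
        ψ (u x) * exp (-V x) * pd i V x * pd i u x := fun x => by
    rw [pd_comp_mul_exp_neg i ((hψ.differentiable one_ne_zero) _)
      ((hu1.differentiable one_ne_zero) x) ((hV.differentiable one_ne_zero) x)]
    ring
  rw [← integral_congr_ae (ae_of_all _ hpd)]
  exact integral_mul_pd_eq_neg_integral_pd_mul i
    (((hψ.comp hu1).mul hV.neg.exp).differentiable one_ne_zero)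
    ((contDiff_pd (k := 1) hu le_rfl i).differentiable one_ne_zero)
    (hD.congr (ae_of_all _ fun x => (hpd x).symm)) hA hGdu

theorem integral_comp_mul_pd_pd_sub_mul_exp_neg (i : Fin n) (hV : ContDiff ℝ 1 V)
    (hψ : ContDiff ℝ 1 ψ) (hu : ContDiff ℝ 2 u) (hVint : Integrable fun x => exp (-V x))
    (hgradV : ∀ x, ‖fderiv ℝ V x‖ * exp (-V x) ≤ Cg) (hu_bdd : ∀ x, |u x| ≤ C)
    (hdu : ∀ x, |pd i u x| ≤ C) (hddu : ∀ x, |pd i (pd i u) x| ≤ C)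
    (hdu_int : Integrable (pd i u)) :
    Integrable (fun x => ψ (u x) * (pd i (pd i u) x - pd i V x * pd i u x) * exp (-V x)) ∧
    Integrable (fun x => deriv ψ (u x) * pd i u x ^ 2 * exp (-V x)) ∧
    ∫ x, ψ (u x) * (pd i (pd i u) x - pd i V x * pd i u x) * exp (-V x) =
      -∫ x, deriv ψ (u x) * pd i u x ^ 2 * exp (-V x) := by
  obtain ⟨M, hM⟩ := hψ.continuous.exists_abs_comp_le C
  obtain ⟨M', hM'⟩ := (hψ.continuous_deriv le_rfl).exists_abs_comp_le C
  have hu1 : ContDiff ℝ 1 u := hu.of_le one_le_two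
  have hψu : Continuous fun x => ψ (u x) := hψ.continuous.comp hu.continuous
  have hA : Integrable fun x => ψ (u x) * exp (-V x) * pd i (pd i u) x :=
    (hVint.bdd_mul (f := fun x => ψ (u x) * pd i (pd i u) x)
      (hψu.mul (continuous_pd_pd hu i i)).aestronglyMeasurable
      (ae_of_all _ fun x => norm_mul_le_of_le (hM _ (hu_bdd x)) (hddu x))).congr
      (ae_of_all _ fun x => by ring)
  have hB : Integrable fun x => ψ (u x) * exp (-V x) * pd i V x * pd i u x :=
    (hdu_int.bdd_mul (f := fun x => ψ (u x) * (pd i V x * exp (-V x)))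
      (hψu.mul ((continuous_pd hV i).mul
        (continuous_exp.comp hV.continuous.neg))).aestronglyMeasurable
      (ae_of_all _ fun x =>
        norm_mul_le_of_le (hM _ (hu_bdd x)) (abs_pd_mul_exp_neg_le (hgradV x) i))).congr
      (ae_of_all _ fun x => by ring)
  have hP : Integrable fun x => deriv ψ (u x) * pd i u x ^ 2 * exp (-V x) :=
    hVint.bdd_mul (f := fun x => deriv ψ (u x) * pd i u x ^ 2)
      (((hψ.continuous_deriv le_rfl).comp hu.continuous).mul
        ((continuous_pd hu1 i).pow 2)).aestronglyMeasurable
      (ae_of_all _ fun x => norm_mul_le_of_le (hM' _ (hu_bdd x))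
        ((norm_pow _ 2).trans_le (pow_le_pow_left₀ (norm_nonneg _) (hdu x) 2)))
  have hGdu : Integrable fun x => ψ (u x) * exp (-V x) * pd i u x :=
    (hVint.bdd_mul (f := fun x => ψ (u x) * pd i u x)
      (hψu.mul (continuous_pd hu1 i)).aestronglyMeasurable
      (ae_of_all _ fun x => norm_mul_le_of_le (hM _ (hu_bdd x)) (hdu x))).congr
      (ae_of_all _ fun x => by ring)
  refine ⟨(hA.sub hB).congr (ae_of_all _ fun x => by simp only [Pi.sub_apply]; ring), hP, ?_⟩
  calc ∫ x, ψ (u x) * (pd i (pd i u) x - pd i V x * pd i u x) * exp (-V x)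
      = ∫ x, (ψ (u x) * exp (-V x) * pd i (pd i u) x -
          ψ (u x) * exp (-V x) * pd i V x * pd i u x) :=
        integral_congr_ae (ae_of_all _ fun x => by ring)
    _ = -(∫ x, (deriv ψ (u x) * pd i u x ^ 2 * exp (-V x) -
            ψ (u x) * exp (-V x) * pd i V x * pd i u x)) -
          ∫ x, ψ (u x) * exp (-V x) * pd i V x * pd i u x := by
        rw [integral_sub hA hB,
          integral_comp_mul_exp_neg_mul_pd_pd i hV hψ hu hA hGdu (hP.sub hB)]
    _ = -∫ x, deriv ψ (u x) * pd i u x ^ 2 * exp (-V x) := by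
        rw [integral_sub hP hB]; ring

theorem integral_comp_mul_weightedLap_mul_exp_neg (hV : ContDiff ℝ 1 V) (hψ : ContDiff ℝ 1 ψ)
    (hu : ContDiff ℝ 2 u) (hVint : Integrable fun x => exp (-V x))
    (hgradV : ∀ x, ‖fderiv ℝ V x‖ * exp (-V x) ≤ Cg) (hu_bdd : ∀ x, |u x| ≤ C)
    (hdu : ∀ i x, |pd i u x| ≤ C) (hddu : ∀ i x, |pd i (pd i u) x| ≤ C)
    (hdu_int : ∀ i, Integrable (pd i u)) :
    ∫ x, ψ (u x) * weightedLap V u x * exp (-V x) =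
      -∫ x, deriv ψ (u x) * (∑ i, pd i u x ^ 2) * exp (-V x) := by
  have hcoord := fun i => integral_comp_mul_pd_pd_sub_mul_exp_neg i hV hψ hu hVint hgradV hu_bdd
    (hdu i) (hddu i) (hdu_int i)
  calc ∫ x, ψ (u x) * weightedLap V u x * exp (-V x)
      = ∫ x, ∑ i, ψ (u x) * (pd i (pd i u) x - pd i V x * pd i u x) * exp (-V x) :=
        integral_congr_ae (ae_of_all _ fun x => by
          simp only [weightedLap, lap, ← Finset.sum_sub_distrib, Finset.mul_sum, Finset.sum_mul])
    _ = ∑ i, -∫ x, deriv ψ (u x) * pd i u x ^ 2 * exp (-V x) := by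
        rw [integral_finsetSum _ fun i _ => (hcoord i).1]
        exact Finset.sum_congr rfl fun i _ => (hcoord i).2.2
    _ = -∫ x, deriv ψ (u x) * (∑ i, pd i u x ^ 2) * exp (-V x) := by
        rw [Finset.sum_neg_distrib, ← integral_finsetSum _ fun i _ => (hcoord i).2.1]
        simp only [Finset.mul_sum, Finset.sum_mul]

end WeightedIBP

section TimeSlices

theorem continuousWithinAt_slice_time {X : Type*} [TopologicalSpace X] {h : ℝ → X → ℝ}
    (hcont : ContinuousOn (fun p : ℝ × X => h p.1 p.2) {p | 0 ≤ p.1}) {t : ℝ} (ht : 0 ≤ t)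
    (x : X) : ContinuousWithinAt (fun r => h r x) (Ici 0) t :=
  (hcont (t, x) ht).comp (f := fun r => (r, x))
    (continuous_id.prodMk continuous_const).continuousWithinAt fun _ hr => hr

variable {E : Type*} [NormedAddCommGroup E] [NormedSpace ℝ E] {h : ℝ → E → ℝ}
  {k : WithTop ℕ∞}

theorem contDiff_slice (hsmooth : ContDiffOn ℝ k (fun p : ℝ × E => h p.1 p.2) {p | 0 ≤ p.1})
    {t : ℝ} (ht : 0 ≤ t) : ContDiff ℝ k (h t) := by
  rw [← contDiffOn_univ]
  exact hsmooth.comp (contDiff_const.prodMk contDiff_id).contDiffOn fun _ _ => ht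

theorem differentiableAt_slice_time
    (hsmooth : ContDiffOn ℝ k (fun p : ℝ × E => h p.1 p.2) {p | 0 ≤ p.1}) (hk : k ≠ 0)
    {s : ℝ} (hs : 0 < s) (x : E) : DifferentiableAt ℝ (fun r => h r x) s := by
  have hnhds : {p : ℝ × E | 0 ≤ p.1} ∈ 𝓝 (s, x) :=
    mem_of_superset ((isOpen_lt continuous_const continuous_fst).mem_nhds hs)
      fun p hp => le_of_lt (show 0 < p.1 from hp)
  exact ((hsmooth.contDiffAt hnhds).differentiableAt hk).comp s (f := fun r => (r, x))
    (differentiableAt_id.prodMk (differentiableAt_const x))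

end TimeSlices

section FokkerPlanck

variable {n : ℕ} {V : EuclideanSpace ℝ (Fin n) → ℝ} {h : ℝ → EuclideanSpace ℝ (Fin n) → ℝ}
  {φ : ℝ → ℝ}

theorem continuousOn_integral_comp_mul {w : EuclideanSpace ℝ (Fin n) → ℝ} (hw : Integrable w)
    (hφ : Continuous φ)
    (hcont : ContinuousOn (fun p : ℝ × EuclideanSpace ℝ (Fin n) => h p.1 p.2) {p | 0 ≤ p.1})
    (hbdd : ∀ b, 0 ≤ b → ∃ C, ∀ t ∈ Icc 0 b, ∀ x, |h t x| ≤ C) :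
    ContinuousOn (fun t => ∫ x, φ (h t x) * w x) (Ici 0) := by
  intro t ht
  obtain ⟨C, hC⟩ := hbdd (t + 1) (by linarith [mem_Ici.1 ht])
  have hnear : ∀ᶠ r in 𝓝[Ici 0] t, r ∈ Icc 0 (t + 1) :=
    mem_of_superset (inter_mem_nhdsWithin _ (Iio_mem_nhds (lt_add_one t)))
      fun r hr => ⟨hr.1, hr.2.le⟩
  refine continuousWithinAt_integral_comp_mul (C := C) hφ hw ?_ ?_
    (continuousWithinAt_slice_time hcont ht)
  · filter_upwards [hnear] with r hr
    exact (hcont.comp_continuous (continuous_const.prodMk continuous_id)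
      fun _ => hr.1).aestronglyMeasurable
  · filter_upwards [hnear] with r hr
    exact hC r hr

theorem hasDerivAt_integral_comp_mul_exp_neg_of_pde {Cg t : ℝ} (hV : ContDiff ℝ 1 V)
    (hVint : Integrable fun x => exp (-V x)) (hgradV : ∀ x, ‖fderiv ℝ V x‖ * exp (-V x) ≤ Cg)
    (hφ : ContDiff ℝ 2 φ)
    (hsmooth : ContDiffOn ℝ 2 (fun p : ℝ × EuclideanSpace ℝ (Fin n) => h p.1 p.2)
      {p | 0 ≤ p.1})
    (hdecay : ∀ b : ℝ, 0 ≤ b → ∀ k : ℕ, ∃ C : ℝ,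
      ∀ t ∈ Icc (0 : ℝ) b, ∀ x : EuclideanSpace ℝ (Fin n),
        |h t x| + (∑ i, |pd i (h t) x|) + (∑ i, ∑ j, |pd i (pd j (h t)) x|) ≤
          C / (1 + ‖x‖) ^ k)
    (hpde : ∀ t : ℝ, 0 < t → ∀ x, deriv (fun s => h s x) t = weightedLap V (h t) x)
    (ht : 0 < t) :
    HasDerivAt (fun s => ∫ x, φ (h s x) * exp (-V x))
      (-∫ x, deriv (deriv φ) (h t x) * (∑ i, pd i (h t) x ^ 2) * exp (-V x)) t := by
  obtain ⟨C₀, hC₀⟩ := hdecay (2 * t) (by positivity) 0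
  -- decay of order `n + 1` makes `∇h(s, ·)` integrable on `ℝⁿ`
  obtain ⟨C₁, hC₁⟩ := hdecay (2 * t) (by positivity) (n + 1)
  simp only [pow_zero, div_one] at hC₀
  have hball : ∀ s ∈ ball t (t / 2), 0 < s ∧ s ∈ Icc 0 (2 * t) := fun s hs => by
    rw [mem_ball, dist_eq, abs_lt] at hs
    exact ⟨by linarith, by linarith, by linarith⟩
  have htIcc : t ∈ Icc 0 (2 * t) := ⟨ht.le, by linarith⟩
  have hht : ContDiff ℝ 2 (h t) := contDiff_slice hsmooth ht.le
  have hderiv := hasDerivAt_integral_comp_mul (φ := φ) (f := h)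
    (f' := fun s => weightedLap V (h s)) (hφ.of_le one_le_two) hVint (half_pos ht)
    (((hVint.const_mul C₀).add
      ((integrable_div_one_add_norm_pow C₁ (by simp)).const_mul Cg)).const_mul n)
    (fun s hs => (contDiff_slice hsmooth (hball s hs).2.1).continuous.aestronglyMeasurable)
    (continuous_weightedLap hV hht).aestronglyMeasurable
    (fun s hs x => (abs_le_of_add_sum_add_sum_le (hC₀ s (hball s hs).2 x)).1)
    (fun s hs x => by
      rw [← hpde s (hball s hs).1 x]
      exact (differentiableAt_slice_time hsmooth two_ne_zero (hball s hs).1 x).hasDerivAt)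
    (fun s hs x => abs_weightedLap_mul_exp_neg_le (hgradV x)
      (fun i => (abs_le_of_add_sum_add_sum_le (hC₀ s (hball s hs).2 x)).2.2 i i)
      (fun i => (abs_le_of_add_sum_add_sum_le (hC₁ s (hball s hs).2 x)).2.1 i))
  rwa [integral_comp_mul_weightedLap_mul_exp_neg hV (ContDiff.deriv' (n := 1) hφ) hht hVint
    hgradV (C := C₀) (fun x => (abs_le_of_add_sum_add_sum_le (hC₀ t htIcc x)).1)
    (fun i x => (abs_le_of_add_sum_add_sum_le (hC₀ t htIcc x)).2.1 i)
    (fun i x => (abs_le_of_add_sum_add_sum_le (hC₀ t htIcc x)).2.2 i i)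
    (fun i => (integrable_div_one_add_norm_pow C₁ (by simp)).mono'
      (continuous_pd (hht.of_le one_le_two) i).aestronglyMeasurable
      (ae_of_all _ fun x => (abs_le_of_add_sum_add_sum_le (hC₁ t htIcc x)).2.1 i))] at hderiv

end FokkerPlanck

theorem fokkerPlanck_lyapunov_general
    (n : ℕ)
    (V : EuclideanSpace ℝ (Fin n) → ℝ)
    (hV : ContDiff ℝ (⊤ : ℕ∞) V)
    (hVint : Integrable (fun x : EuclideanSpace ℝ (Fin n) => Real.exp (-V x)))
    (hgradVbdd : ∃ C : ℝ, ∀ x, ‖fderiv ℝ V x‖ * Real.exp (-V x) ≤ C)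
    (φ : ℝ → ℝ) (hφ : ContDiff ℝ 2 φ) (hφconv : ConvexOn ℝ Set.univ φ)
    (h : ℝ → EuclideanSpace ℝ (Fin n) → ℝ)
    (hsmooth : ContDiffOn ℝ (⊤ : ℕ∞) (fun p : ℝ × EuclideanSpace ℝ (Fin n) => h p.1 p.2)
      {p : ℝ × EuclideanSpace ℝ (Fin n) | 0 ≤ p.1})
    (hdecay : ∀ b : ℝ, 0 ≤ b → ∀ k : ℕ, ∃ C : ℝ,
      ∀ t ∈ Set.Icc (0 : ℝ) b, ∀ x : EuclideanSpace ℝ (Fin n),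
        |h t x| + (∑ i, |pd i (h t) x|) + (∑ i, ∑ j, |pd i (pd j (h t)) x|) ≤
          C / (1 + ‖x‖) ^ k)
    (hpde : ∀ t : ℝ, 0 < t → ∀ x,
      deriv (fun s => h s x) t = lap (h t) x - ∑ i, pd i V x * pd i (h t) x) :
    (∀ t : ℝ, 0 < t →
      deriv (fun s => ∫ x : EuclideanSpace ℝ (Fin n), φ (h s x) * Real.exp (-V x)) t =
        -∫ x : EuclideanSpace ℝ (Fin n),
          deriv (deriv φ) (h t x) * (∑ i, (pd i (h t) x) ^ 2) * Real.exp (-V x) ∧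
      deriv (fun s => ∫ x : EuclideanSpace ℝ (Fin n), φ (h s x) * Real.exp (-V x)) t ≤ 0) ∧
    AntitoneOn (fun t => ∫ x : EuclideanSpace ℝ (Fin n), φ (h t x) * Real.exp (-V x))
      (Set.Ici (0 : ℝ)) := by
  obtain ⟨Cg, hCg⟩ := hgradVbdd
  have hderiv : ∀ t, 0 < t → HasDerivAt (fun s => ∫ x, φ (h s x) * exp (-V x))
      (-∫ x, deriv (deriv φ) (h t x) * (∑ i, pd i (h t) x ^ 2) * exp (-V x)) t :=
    fun t ht => hasDerivAt_integral_comp_mul_exp_neg_of_pde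
      (hV.of_le (WithTop.coe_le_coe.2 le_top)) hVint hCg hφ
      (hsmooth.of_le (WithTop.coe_le_coe.2 le_top)) hdecay hpde ht
  have hderiv_nonpos : ∀ t, 0 < t → deriv (fun s => ∫ x, φ (h s x) * exp (-V x)) t ≤ 0 :=
    fun t ht => (hderiv t ht).deriv ▸ neg_nonpos.2 (integral_nonneg fun x =>
      mul_nonneg (mul_nonneg (hφconv.deriv_deriv_nonneg (hφ.differentiable two_ne_zero) _)
        (Finset.sum_nonneg fun i _ => sq_nonneg _)) (exp_pos _).le)
  have hbdd : ∀ b, 0 ≤ b → ∃ C, ∀ t ∈ Icc 0 b, ∀ x, |h t x| ≤ C := fun b hb => by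
    obtain ⟨C, hC⟩ := hdecay b hb 0
    exact ⟨C, fun t ht x => by simpa using (abs_le_of_add_sum_add_sum_le (hC t ht x)).1⟩
  refine ⟨fun t ht => ⟨(hderiv t ht).deriv, hderiv_nonpos t ht⟩, ?_⟩
  refine antitoneOn_of_deriv_nonpos (convex_Ici 0)
    (continuousOn_integral_comp_mul hVint hφ.continuous hsmooth.continuousOn hbdd) ?_ ?_ <;>
    rw [interior_Ici]
  · exact fun t ht => (hderiv t ht).differentiableAt.differentiableWithinAt
  · exact hderiv_nonpos

/-- For the Fokker–Planck equation in the form `∂h/∂t = Δh − ∇V·∇h` (obtained from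
`∂ρ/∂t = ∇·(∇ρ + ρ∇V)` via `ρ = h e^{−V}`), and any `C²` convex `φ`, the functional
`∫ φ(h(t,·)) e^{−V}` satisfies
`d/dt ∫ φ(h) e^{−V} = −∫ φ''(h) |∇h|² e^{−V} ≤ 0` for `t > 0`;
in particular it is a Lyapunov functional (nonincreasing in time). -/
theorem fokkerPlanck_lyapunov
    (n : ℕ) (hn : 1 ≤ n)
    (V : EuclideanSpace ℝ (Fin n) → ℝ)
    (hV : ContDiff ℝ (⊤ : ℕ∞) V)
    (hVint : Integrable (fun x : EuclideanSpace ℝ (Fin n) => Real.exp (-V x)))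
    (hVbdd : ∃ C : ℝ, ∀ x, Real.exp (-V x) ≤ C)
    (hgradVbdd : ∃ C : ℝ, ∀ x, ‖fderiv ℝ V x‖ * Real.exp (-V x) ≤ C)
    (φ : ℝ → ℝ) (hφ : ContDiff ℝ 2 φ) (hφconv : ConvexOn ℝ Set.univ φ)
    (h : ℝ → EuclideanSpace ℝ (Fin n) → ℝ)
    (hsmooth : ContDiffOn ℝ (⊤ : ℕ∞) (fun p : ℝ × EuclideanSpace ℝ (Fin n) => h p.1 p.2)
      {p : ℝ × EuclideanSpace ℝ (Fin n) | 0 ≤ p.1})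
    (hdecay : ∀ b : ℝ, 0 ≤ b → ∀ k : ℕ, ∃ C : ℝ,
      ∀ t ∈ Set.Icc (0 : ℝ) b, ∀ x : EuclideanSpace ℝ (Fin n),
        |h t x| + (∑ i, |pd i (h t) x|) + (∑ i, ∑ j, |pd i (pd j (h t)) x|) ≤
          C / (1 + ‖x‖) ^ k)
    (hpde : ∀ t : ℝ, 0 < t → ∀ x,
      deriv (fun s => h s x) t = lap (h t) x - ∑ i, pd i V x * pd i (h t) x) :
    (∀ t : ℝ, 0 < t →
      deriv (fun s => ∫ x : EuclideanSpace ℝ (Fin n), φ (h s x) * Real.exp (-V x)) t =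
        -∫ x : EuclideanSpace ℝ (Fin n),
          deriv (deriv φ) (h t x) * (∑ i, (pd i (h t) x) ^ 2) * Real.exp (-V x) ∧
      deriv (fun s => ∫ x : EuclideanSpace ℝ (Fin n), φ (h s x) * Real.exp (-V x)) t ≤ 0) ∧
    AntitoneOn (fun t => ∫ x : EuclideanSpace ℝ (Fin n), φ (h t x) * Real.exp (-V x))
      (Set.Ici (0 : ℝ)) :=
  fokkerPlanck_lyapunov_general n V hV hVint hgradVbdd φ hφ hφconv h hsmooth hdecay hpde
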